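/- Let (f, P_1) be an allocation rule and bidder 1's payment scheme for a combinatorial auction with additive bidders, realized by a dominant-strategy, individually rational, no-negative-transfers mechanism. Let k = max{m,n} ≥ 2. Suppose on profile v¹ = (v_1^{e1,one}, v_2^{e2,one}, ..., v_n^{en,one}) bidder 1 wins a bundle containing e_1. If bidder 1's valuation is v_1^{both} (value 2k²+2 for e_1, 2k² for e_2, 0 elsewhere, additively) and the other bidders have the v_i^{ei,one} valuations, then bidder 1 wins a bundle containing e_1 and pays at most 4k²+2. -/
import Mathlib


/-- The additive valuation with per-item values `v`: `val(S) = Σ_{j ∈ S} v j`. -/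
noncomputable def addVal {m : ℕ} (v : Fin m → NNReal) (X : Finset (Fin m)) : ℝ :=
  ∑ j ∈ X, (v j : ℝ)

/-- The item desired by bidder `i`: item `e_i` for `i ≤ m`, and item `e_m` for `i > m`. -/
def eIdx {n : ℕ} (m : ℕ) (hm : 0 < m) (i : Fin n) : Fin m :=
  ⟨min i (m - 1), by omega⟩

/-- The additive valuation with value `1` for item `e` and `0` elsewhere. -/
noncomputable def oneVal {m : ℕ} (e : Fin m) : Fin m → NNReal :=
  fun x => if x = e then 1 else 0

/-- Lemma 4, part 4: Let `(f, P₁)` be realized by a dominant-strategy,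
individually rational, no-negative-transfers mechanism over additive valuations, with
`k = max {m, n} ≥ 2`. Suppose on the profile `v¹ = (v_1^{e1,one}, …, v_n^{en,one})`
bidder `1` wins a bundle containing `e_1` and pays at most `1`. Then on the profile where
bidder `1` has valuation `v_1^{both}` (value `2k²+2` for `e_1`, `2k²` for `e_2`, `0`
elsewhere) and the others keep their `v_i^{ei,one}` valuations, bidder `1` wins a bundle
containing `e_1` and pays at most `4k² + 2`. -/
theorem additive_both_wins_e1
    (m n : ℕ) (hm : 2 ≤ m) (hn : 2 ≤ n)
    (f : (Fin n → Fin m → NNReal) → Fin n → Finset (Fin m))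
    (P1 : (Fin n → Fin m → NNReal) → ℝ)
    (k : ℕ) (hk : k = max m n)
    (i0 : Fin n) (hi0 : i0 = ⟨0, by omega⟩)
    (e0 : Fin m) (he0 : e0 = ⟨0, by omega⟩) (e1 : Fin m) (he1 : e1 = ⟨1, by omega⟩)
    -- dominant-strategy incentive compatibility for bidder 1
    (hDSIC : ∀ (v : Fin n → Fin m → NNReal) (d' : Fin m → NNReal),
      addVal (v i0) (f v i0) - P1 v ≥
        addVal (v i0) (f (Function.update v i0 d') i0) - P1 (Function.update v i0 d'))
    -- individual rationality for bidder 1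
    (hIR : ∀ v : Fin n → Fin m → NNReal, 0 ≤ addVal (v i0) (f v i0) - P1 v)
    -- no-negative-transfers for bidder 1
    (hNNT : ∀ v : Fin n → Fin m → NNReal, 0 ≤ P1 v)
    (vONE : Fin n → Fin m → NNReal)
    (hvONE : vONE = fun j => oneVal (eIdx m (by omega) j))
    (hwin : e0 ∈ f vONE i0) (hpay : P1 vONE ≤ 1)
    (vboth : Fin m → NNReal)
    (hvboth : vboth = fun x => if x = e0 then 2 * (k : NNReal) ^ 2 + 2
      else if x = e1 then 2 * (k : NNReal) ^ 2 else 0)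
    (vB : Fin n → Fin m → NNReal) (hvB : vB = Function.update vONE i0 vboth) :
    e0 ∈ f vB i0 ∧ P1 vB ≤ 4 * (k : ℝ) ^ 2 + 2 := by

  have hne : e0 ≠ e1 := by subst he0 he1; simp [Fin.ext_iff]
  -- value of any bundle under vboth
  have hval : ∀ S : Finset (Fin m), addVal vboth S =
      (if e0 ∈ S then (2 * (k : ℝ) ^ 2 + 2) else 0) +
      (if e1 ∈ S then (2 * (k : ℝ) ^ 2) else 0) := by
    intro S
    have : ∀ j, ((vboth j : ℝ)) =
        (if j = e0 then (2 * (k : ℝ) ^ 2 + 2) else 0) +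
        (if j = e1 then (2 * (k : ℝ) ^ 2) else 0) := by
      intro j
      subst hvboth
      by_cases h0 : j = e0 <;> by_cases h1 : j = e1 <;>
        simp_all [hne] <;> push_cast <;> ring
    unfold addVal
    rw [Finset.sum_congr rfl (fun j _ => this j), Finset.sum_add_distrib,
      Finset.sum_ite_eq' S e0, Finset.sum_ite_eq' S e1]
  have hvBi0 : vB i0 = vboth := by subst hvB; simp
  have hupd : Function.update vB i0 (vONE i0) = vONE := by
    subst hvB; simp
  have hds := hDSIC vB (vONE i0)
  rw [hupd, hvBi0] at hds
  have hvalONE : addVal vboth (f vONE i0) ≥ 2 * (k : ℝ) ^ 2 + 2 := by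
    rw [hval]
    have hk2 : (0:ℝ) ≤ 2 * (k : ℝ) ^ 2 := by positivity
    rw [if_pos hwin]
    split_ifs <;> linarith
  have key : addVal vboth (f vB i0) - P1 vB ≥ 2 * (k : ℝ) ^ 2 + 1 := by
    linarith
  have hnnt := hNNT vB
  have hwinB : e0 ∈ f vB i0 := by
    by_contra h
    rw [hval] at key
    rw [if_neg h] at key
    split_ifs at key <;> nlinarith
  refine ⟨hwinB, ?_⟩
  rw [hval] at key
  rw [if_pos hwinB] at key
  split_ifs at key <;> nlinarith
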